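/- Let r : ℂ → ℝ be a C¹ function satisfying r(ξ) + r(−1/conj ξ) = w for all ξ ≠ 0 (constant width w), and let F = (1/2)(1+|ξ|²)²·∂r/∂ξ̄. Then for all ξ ≠ 0, F(−1/conj ξ) = −(1/conj(ξ)²)·conj(F(ξ)). -/

import Mathlib

/-!
Differentiating the width identity `r + r ∘ τ = w` at `ξ ≠ 0` gives `Dr(τ ξ) ∘ Dτ(ξ) = -Dr(ξ)`,
where `τ z = -1 / conj z` is antiholomorphic with `Dτ(ξ) v = conj v / conj ξ ^ 2`. Since
`Dr(ξ) v = 2 Re (conj (∂r/∂ξ̄) · v)`, this reads `∂r/∂ξ̄ (τ ξ) = -ξ² · conj (∂r/∂ξ̄ (ξ))`, and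
`|τ ξ|² = 1 / |ξ|²` turns the conformal factor `(1 + |τ ξ|²)²` into `(1 + |ξ|²)² / |ξ|⁴`.
-/

open Complex MeasureTheory ComplexConjugate

noncomputable section

/-- Wirtinger derivative ∂/∂ξ of a complex-valued function. -/
def wd (f : ℂ → ℂ) (ξ : ℂ) : ℂ :=
  (1 / 2) * (fderiv ℝ f ξ 1 - Complex.I * fderiv ℝ f ξ Complex.I)

/-- Wirtinger derivative ∂/∂ξ̄ of a real-valued function, as a complex number. -/
def wdbarR (r : ℂ → ℝ) (ξ : ℂ) : ℂ :=
  (1 / 2) * ((fderiv ℝ r ξ 1 : ℝ) + Complex.I * (fderiv ℝ r ξ Complex.I : ℝ))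

/-- F = (1/2)(1+|ξ|²)² ∂r/∂ξ̄. -/
def Fcong (r : ℂ → ℝ) (ξ : ℂ) : ℂ :=
  (1 / 2) * ((1 + Complex.normSq ξ) ^ 2 : ℝ) * wdbarR r ξ

/-- ψ = (1+|ξ|²)² ∂/∂ξ [F/(1+|ξ|²)²] (real-valued). -/
def psiSlope (r : ℂ → ℝ) (ξ : ℂ) : ℝ :=
  (((1 + Complex.normSq ξ) ^ 2 : ℝ) *
    wd (fun z => Fcong r z / (((1 + Complex.normSq z) ^ 2 : ℝ) : ℂ)) ξ).re

/-- σ = −∂(conj F)/∂ξ. -/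
def sigmaSlope (r : ℂ → ℝ) (ξ : ℂ) : ℂ :=
  - wd (fun z => conj (Fcong r z)) ξ

/-- The round sphere area measure in the stereographic coordinate. -/
def muSphere : Measure ℂ :=
  volume.withDensity fun ξ => ENNReal.ofReal (4 / (1 + Complex.normSq ξ) ^ 2)

/-- Constant width w: r(ξ) + r(−1/conj ξ) = w for all ξ ≠ 0. -/
def ConstWidth (r : ℂ → ℝ) (w : ℝ) : Prop :=
  ∀ ξ : ℂ, ξ ≠ 0 → r ξ + r (-1 / conj ξ) = w

theorem fderiv_apply_eq_two_mul_re_conj_wdbarR (r : ℂ → ℝ) (ξ v : ℂ) :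
    fderiv ℝ r ξ v = 2 * (conj (wdbarR r ξ) * v).re := by
  have hv : v = v.re • (1 : ℂ) + v.im • I := by simp [Complex.real_smul]
  rw [hv, map_add, map_smul, map_smul]
  simp only [wdbarR, smul_eq_mul, map_mul, map_add, conj_ofReal, conj_I, mul_re, mul_im, add_re,
    add_im, ofReal_re, ofReal_im, I_re, I_im, neg_re, neg_im, real_smul, one_re, one_im, map_div₀,
    map_one, map_ofNat, div_ofNat_re, div_ofNat_im]
  ring

theorem Complex.eq_of_forall_re_mul_eq {a b : ℂ} (h : ∀ v : ℂ, (a * v).re = (b * v).re) :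
    a = b := by
  have h1 := h 1
  have hI := h I
  simp only [mul_one, mul_I_re, neg_inj] at h1 hI
  exact Complex.ext h1 hI

theorem hasFDerivAt_neg_one_div_conj {ξ : ℂ} (hξ : ξ ≠ 0) :
    HasFDerivAt (fun z : ℂ => -1 / conj z) ((conj ξ ^ 2)⁻¹ • (conjCLE : ℂ →L[ℝ] ℂ)) ξ := by
  have hc : conj ξ ≠ 0 := by simpa using hξ
  have h := (((hasDerivAt_inv hc).hasFDerivAt.restrictScalars ℝ).comp ξ
    conjCLE.hasFDerivAt).neg
  have hfun : (fun z : ℂ => -1 / conj z) = -(fun y => y⁻¹) ∘ conj := by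
    funext z; simp [neg_div]
  rw [hfun]
  refine h.congr_fderiv (ContinuousLinearMap.ext fun v => ?_)
  simp [mul_comm]

theorem ConstWidth.fderiv_neg_one_div_conj {r : ℂ → ℝ} {w : ℝ} (hcw : ConstWidth r w)
    {ξ : ℂ} (hξ : ξ ≠ 0) (hrξ : DifferentiableAt ℝ r ξ)
    (hrτ : DifferentiableAt ℝ r (-1 / conj ξ)) (v : ℂ) :
    fderiv ℝ r (-1 / conj ξ) ((conj ξ ^ 2)⁻¹ * conj v) = -fderiv ℝ r ξ v := by
  have hsum : (fun z => r (-1 / conj z)) =ᶠ[nhds ξ] fun z => w - r z := by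
    filter_upwards [isOpen_compl_singleton.mem_nhds hξ] with z hz
    linarith [hcw z hz]
  have hcomp := (hrτ.hasFDerivAt.comp ξ (hasFDerivAt_neg_one_div_conj hξ)).congr_of_eventuallyEq
    hsum.symm
  have := congrArg (· v) (hcomp.unique ((hasFDerivAt_const w ξ).sub hrξ.hasFDerivAt))
  simpa using this

theorem ConstWidth.wdbarR_neg_one_div_conj {r : ℂ → ℝ} {w : ℝ} (hcw : ConstWidth r w)
    {ξ : ℂ} (hξ : ξ ≠ 0) (hrξ : DifferentiableAt ℝ r ξ)
    (hrτ : DifferentiableAt ℝ r (-1 / conj ξ)) :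
    wdbarR r (-1 / conj ξ) = -ξ ^ 2 * conj (wdbarR r ξ) := by
  have hξ2 : ξ ^ 2 ≠ 0 := pow_ne_zero 2 hξ
  have hscaled : wdbarR r (-1 / conj ξ) * (ξ ^ 2)⁻¹ = -conj (wdbarR r ξ) := by
    refine Complex.eq_of_forall_re_mul_eq fun v => ?_
    have h := hcw.fderiv_neg_one_div_conj hξ hrξ hrτ v
    rw [fderiv_apply_eq_two_mul_re_conj_wdbarR, fderiv_apply_eq_two_mul_re_conj_wdbarR,
      ← Complex.conj_re] at h
    simp only [map_mul, map_inv₀, map_pow, conj_conj] at h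
    rw [mul_assoc, neg_mul, neg_re]
    linarith
  rw [← inv_mul_cancel_right₀ hξ2 (wdbarR r _), hscaled]
  ring

theorem normSq_neg_one_div_conj (ξ : ℂ) : normSq (-1 / conj ξ) = (normSq ξ)⁻¹ := by
  simp

theorem constant_width_congruence_reflection_symmetry
    (r : ℂ → ℝ) (w : ℝ) (hr : ContDiff ℝ 1 r) (hcw : ConstWidth r w) :
    ∀ ξ : ℂ, ξ ≠ 0 →
      Fcong r (-1 / conj ξ) = -(1 / (conj ξ) ^ 2) * conj (Fcong r ξ) := by
  intro ξ hξ
  have hdiff := hr.differentiable one_ne_zero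
  have hc : conj ξ ≠ 0 := by simpa using hξ
  rw [Fcong, Fcong, hcw.wdbarR_neg_one_div_conj hξ (hdiff ξ) (hdiff _), normSq_neg_one_div_conj]
  simp only [map_mul, map_div₀, map_one, map_ofNat, conj_ofReal]
  push_cast
  rw [← mul_conj]
  field_simp
  ring

end
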